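/- arXiv:2004.07997 — 4 statements merged into one kernel-verified Lean document; each statement's English description precedes it below -/
import Mathlib

section
/- If P(τ₁ = 1) > 0, then P(τ₁ < ∞) = 1. -/
open MeasureTheory ProbabilityTheory Filter ENNReal
open scoped Topology

/-!
Let `A n = {K (n + i) ≤ i for all i}`: the event `A 1` holds where `τ₁ = 1`, and `τ₁ ≤ n` on
`A n` for `n ≥ 1`. Since `(K (n + i))ᵢ` is i.i.d. with the same marginals as `(K i)ᵢ`, both
sequences have the same law and every `A n` has the probability of `A 0`, which is at least
`P (τ₁ = 1) > 0`. Hence `limsup A` has positive probability by reverse Fatou; it is a tail event of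
the independent sequence `K`, so by Kolmogorov's 0-1 law it has probability one, and `τ₁ < ∞` on it.
-/

/-- `τ₁ := inf {n ≥ 1 : K_{n+i} ≤ i for all i ≥ 0}`, with `inf ∅ = ∞`. -/
noncomputable def tau1 {Ω : Type*} (K : ℕ → Ω → ℕ) (ω : Ω) : ℕ∞ :=
  sInf {m : ℕ∞ | ∃ n : ℕ, m = (n : ℕ∞) ∧ 1 ≤ n ∧ ∀ i : ℕ, K (n + i) ω ≤ i}

theorem Set.limsup_atTop_eq_iInter_iUnion {α : Type*} (s : ℕ → Set α) :
    limsup s atTop = ⋂ n, ⋃ i ≥ n, s i :=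
  limsup_eq_iInf_iSup_of_nat

theorem MeasureTheory.limsup_measure_le_measure_limsup {α : Type*} [MeasurableSpace α]
    {μ : Measure α} [IsFiniteMeasure μ] {s : ℕ → Set α} (hs : ∀ n, NullMeasurableSet (s n) μ) :
    limsup (fun n ↦ μ (s n)) atTop ≤ μ (limsup s atTop) := by
  have htail_anti : Antitone fun n ↦ ⋃ i ≥ n, s i :=
    fun m n hmn ↦ Set.biUnion_mono (fun i (hi : n ≤ i) ↦ hmn.trans hi) fun _ _ ↦ le_rfl
  rw [limsup_eq_iInf_iSup_of_nat, Set.limsup_atTop_eq_iInter_iUnion,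
    htail_anti.measure_iInter (fun n ↦ .biUnion (Set.to_countable _) fun i _ ↦ hs i)
      ⟨0, measure_ne_top μ _⟩]
  exact iInf_mono fun n ↦ iSup₂_le fun i hi ↦ measure_mono (Set.subset_biUnion_of_mem hi)

theorem MeasurableSpace.measurableSet_limsup_atTop {α : Type*} {m : ℕ → MeasurableSpace α}
    {s : ℕ → Set α} (hs : ∀ n, MeasurableSet[⨆ j ≥ n, m j] (s n)) :
    MeasurableSet[limsup m atTop] (limsup s atTop) := by
  rw [limsup_eq_iInf_iSup_of_nat, MeasurableSpace.measurableSet_iInf]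
  intro N
  rw [← limsup_nat_add s N, Set.limsup_atTop_eq_iInter_iUnion]
  refine .iInter fun n ↦ .biUnion (Set.to_countable _) fun i _ ↦ ?_
  have hle : (⨆ j ≥ i + N, m j) ≤ ⨆ j ≥ N, m j := iSup₂_mono' fun j hj ↦ ⟨j, by omega, le_rfl⟩
  exact hle _ (hs (i + N))

theorem ProbabilityTheory.iIndepFun.map_comp_eq {Ω ι 𝓧 : Type*} [MeasurableSpace Ω]
    [MeasurableSpace 𝓧] {P : Measure Ω} {X : ι → Ω → 𝓧} {g : ι → ι}
    (hX : ∀ i, Measurable (X i)) (h : iIndepFun X P) (hg : g.Injective)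
    (hlaw : ∀ i, P.map (X (g i)) = P.map (X i)) :
    P.map (fun ω i ↦ X (g i) ω) = P.map (fun ω i ↦ X i ω) := by
  rw [(h.precomp hg).map_fun_eq_infinitePi_map (fun i ↦ hX (g i)),
    h.map_fun_eq_infinitePi_map hX]
  simp_rw [hlaw]

section boundedFrom

variable {Ω : Type*} (K : ℕ → Ω → ℕ)

def boundedFrom (n : ℕ) : Set Ω := {ω | ∀ i, K (n + i) ω ≤ i}

theorem measurableSet_boundedFrom (n : ℕ) :
    MeasurableSet[⨆ j ≥ n, MeasurableSpace.comap (K j) inferInstance] (boundedFrom K n) := by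
  rw [boundedFrom, Set.ofPred_forall]
  refine .iInter fun i ↦ ?_
  have hle : MeasurableSpace.comap (K (n + i)) inferInstance ≤
      ⨆ j ≥ n, MeasurableSpace.comap (K j) inferInstance :=
    le_iSup₂ (f := fun j (_ : j ≥ n) ↦ MeasurableSpace.comap (K j) inferInstance) (n + i) (by omega)
  exact hle _ ⟨Set.Iic i, measurableSet_Iic, rfl⟩

variable {K}

theorem tau1_le_of_mem_boundedFrom {n : ℕ} {ω : Ω} (hn : 1 ≤ n) (hω : ω ∈ boundedFrom K n) :
    tau1 K ω ≤ n :=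
  sInf_le ⟨n, rfl, hn, hω⟩

theorem mem_boundedFrom_of_tau1_eq {n : ℕ} {ω : Ω} (h : tau1 K ω = n) : ω ∈ boundedFrom K n := by
  have hne : {m : ℕ∞ | ∃ n : ℕ, m = n ∧ 1 ≤ n ∧ ∀ i, K (n + i) ω ≤ i}.Nonempty := by
    by_contra hempty
    simp [tau1, Set.not_nonempty_iff_eq_empty.1 hempty] at h
  obtain ⟨k, hk, -, hK⟩ := csInf_mem hne
  obtain rfl : k = n := by exact_mod_cast hk.symm.trans h
  exact hK

theorem limsup_boundedFrom_subset : limsup (boundedFrom K) atTop ⊆ {ω | tau1 K ω < ⊤} := by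
  intro ω hω
  obtain ⟨n, hn, hωn⟩ := frequently_atTop.1 (mem_limsup_iff_frequently_mem.1 hω) 1
  exact (tau1_le_of_mem_boundedFrom hn hωn).trans_lt (ENat.natCast_lt_top n)

theorem measure_boundedFrom_eq [MeasurableSpace Ω] {P : Measure Ω} (hK : ∀ n, Measurable (K n))
    (hindep : iIndepFun K P) (hident : ∀ n, P.map (K n) = P.map (K 0)) (n : ℕ) :
    P (boundedFrom K n) = P (boundedFrom K 0) := by
  have hshift : P.map (fun ω i ↦ K (n + i) ω) = P.map (fun ω i ↦ K i ω) :=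
    hindep.map_comp_eq hK (add_right_injective n) fun i ↦ (hident _).trans (hident i).symm
  have hS : MeasurableSet {x : ℕ → ℕ | ∀ i, x i ≤ i} := by
    rw [Set.ofPred_forall]
    exact .iInter fun i ↦ measurable_pi_apply i measurableSet_Iic
  calc P (boundedFrom K n) = P.map (fun ω i ↦ K (n + i) ω) {x | ∀ i, x i ≤ i} :=
        (Measure.map_apply (measurable_pi_lambda _ fun i ↦ hK (n + i)) hS).symm
    _ = P.map (fun ω i ↦ K i ω) {x | ∀ i, x i ≤ i} := by rw [hshift]
    _ = P (boundedFrom K 0) := by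
        rw [Measure.map_apply (measurable_pi_lambda _ hK) hS]
        simp only [boundedFrom, zero_add]
        rfl

end boundedFrom

/-- If `P(τ₁ = 1) > 0`, then `P(τ₁ < ∞) = 1`. -/
theorem tau1_finite_of_pos {Ω : Type*} [MeasurableSpace Ω] (P : Measure Ω)
    [IsProbabilityMeasure P] (K : ℕ → Ω → ℕ) (hmeas : ∀ n, Measurable (K n))
    (hindep : iIndepFun K P)
    (hident : ∀ n, P.map (K n) = P.map (K 0))
    (hpos : 0 < P {ω | tau1 K ω = 1}) :
    P {ω | tau1 K ω < ⊤} = 1 := by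
  have hlimsup_pos : 0 < P (limsup (boundedFrom K) atTop) := calc
    0 < P {ω | tau1 K ω = 1} := hpos
    _ ≤ P (boundedFrom K 1) := measure_mono fun ω hω ↦ mem_boundedFrom_of_tau1_eq (n := 1) hω
    _ = limsup (fun n ↦ P (boundedFrom K n)) atTop := by
      simp_rw [measure_boundedFrom_eq hmeas hindep hident, limsup_const]
    _ ≤ P (limsup (boundedFrom K) atTop) := limsup_measure_le_measure_limsup fun n ↦
      ((iSup₂_le fun j _ ↦ (hmeas j).comap_le) _ (measurableSet_boundedFrom K n)).nullMeasurableSet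
  have htail := MeasurableSpace.measurableSet_limsup_atTop (measurableSet_boundedFrom K)
  have h01 := measure_zero_or_one_of_measurableSet_limsup_atTop (fun n ↦ (hmeas n).comap_le)
    ((iIndepFun_iff_iIndep _ _ _).1 hindep) htail
  refine le_antisymm prob_le_one ?_
  calc 1 = P (limsup (boundedFrom K) atTop) := (h01.resolve_left hlimsup_pos.ne').symm
    _ ≤ P {ω | tau1 K ω < ⊤} := measure_mono limsup_boundedFrom_subset
end

section
/- Suppose P(τ₁ = 1) > 0. Define T₁ := 1, S_k := inf{i ≥ 0 : K_{T_k + i} > i} (with inf ∅ = ∞), T_{k+1} := T_k + S_k + 1 on {S_k < ∞}, and N := inf{k ≥ 1 : S_k = ∞}. Then N is distributed as a geometric random variable with success parameter P(τ₁ = 1), i.e. P(N = k) = P(τ₁ = 1)·(1 − P(τ₁ = 1))^{k−1} for every k ≥ 1; moreover τ₁ = T_N = N + Σ_{k=1}^{N−1} S_k almost surely. -/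
open MeasureTheory ProbabilityTheory Filter ENNReal
open scoped Topology

/-- `S(t) := inf {i ≥ 0 : K_{t+i} > i}` (with `inf ∅ = ∞`): the waiting time, started at
position `t`, for a memory variable reaching back to before `t`. -/
noncomputable def Sgen {Ω : Type*} (K : ℕ → Ω → ℕ) (t : ℕ) (ω : Ω) : ℕ∞ :=
  sInf {m : ℕ∞ | ∃ i : ℕ, m = (i : ℕ∞) ∧ i < K (t + i) ω}

/-- `T₁ := 1` and `T_{k+1} := T_k + S_k + 1`, where `S_k := S(T_k)` (on `{T_k < ∞}`;
the value `⊤` propagates since `⊤ + x = ⊤` in `ℕ∞`). -/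
noncomputable def Tgen {Ω : Type*} (K : ℕ → Ω → ℕ) : ℕ → Ω → ℕ∞
  | 0, _ => 1
  | 1, _ => 1
  | (k + 2), ω =>
      Tgen K (k + 1) ω + Sgen K (ENat.toNat (Tgen K (k + 1) ω)) ω + 1

/-- `S_k := S(T_k)`. -/
noncomputable def Sk {Ω : Type*} (K : ℕ → Ω → ℕ) (k : ℕ) (ω : Ω) : ℕ∞ :=
  Sgen K (ENat.toNat (Tgen K k ω)) ω

/-- `N := inf {k ≥ 1 : S_k = ∞}`. -/
noncomputable def Ngen {Ω : Type*} (K : ℕ → Ω → ℕ) (ω : Ω) : ℕ∞ :=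
  sInf {m : ℕ∞ | ∃ k : ℕ, m = (k : ℕ∞) ∧ 1 ≤ k ∧ Sk K k ω = ⊤}

/-!
The renewal times `T_k` are stopping times for the filtration of the `K j`, while the event
`S_k = ∞` only depends on `K_{T_k}, K_{T_k + 1}, …`. By independence and the shift invariance of
the i.i.d. law, conditionally on `T_k < ∞` that event has probability `p = P(S(1) = ∞) = P(τ₁ = 1)`
whatever happened before, so `P(T_{k+1} < ∞) = (1 - p)^k` and `N` is geometric. On `{N = k}` every
position `n ∈ [1, T_k)` is overshot by the memory variable ending its excursion, while `T_k` itself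
starts a block, so `τ₁ = T_k`; the sum formula is the recursion `T_{k+1} = T_k + S_k + 1` unrolled.
-/

lemma sInf_natCast_setOf_eq_top {Q : ℕ → Prop} :
    sInf {m : ℕ∞ | ∃ n : ℕ, m = n ∧ Q n} = ⊤ ↔ ∀ n, ¬ Q n := by
  simp only [sInf_eq_top, Set.mem_ofPred_eq]
  refine ⟨fun h n hQ ↦ ENat.natCast_ne_top n (h n ⟨n, rfl, hQ⟩), ?_⟩
  rintro h _ ⟨n, rfl, hQ⟩
  exact absurd hQ (h n)

lemma sInf_natCast_setOf_eq_natCast {Q : ℕ → Prop} {k : ℕ} :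
    sInf {m : ℕ∞ | ∃ n : ℕ, m = n ∧ Q n} = k ↔ Q k ∧ ∀ n, Q n → k ≤ n := by
  set S := {m : ℕ∞ | ∃ n : ℕ, m = n ∧ Q n}
  constructor
  · intro h
    have hS : S.Nonempty := by
      by_contra hS
      simp [Set.not_nonempty_iff_eq_empty.1 hS] at h
    obtain ⟨n, hn, hQ⟩ := h ▸ csInf_mem hS
    rw [Nat.cast_inj] at hn
    refine ⟨hn ▸ hQ, fun n hQ ↦ ?_⟩
    exact_mod_cast h ▸ csInf_le (OrderBot.bddBelow S) ⟨n, rfl, hQ⟩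
  · rintro ⟨hQ, hmin⟩
    refine IsLeast.csInf_eq ⟨⟨k, rfl, hQ⟩, ?_⟩
    rintro _ ⟨n, rfl, hn⟩
    exact_mod_cast hmin n hn

section Pathwise

variable {Ω : Type*} (K : ℕ → Ω → ℕ) (ω : Ω)

lemma Sgen_eq_top_iff {t : ℕ} : Sgen K t ω = ⊤ ↔ ∀ i, K (t + i) ω ≤ i := by
  simp only [Sgen, sInf_natCast_setOf_eq_top, not_lt]

lemma Sgen_eq_natCast_iff {t s : ℕ} :
    Sgen K t ω = s ↔ s < K (t + s) ω ∧ ∀ i < s, K (t + i) ω ≤ i := by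
  rw [Sgen, sInf_natCast_setOf_eq_natCast]
  refine and_congr_right fun _ ↦ forall_congr' fun i ↦ ?_
  rw [← not_imp_not]
  push Not
  rfl

lemma tau1_eq_natCast_iff {t : ℕ} :
    tau1 K ω = t ↔ 1 ≤ t ∧ Sgen K t ω = ⊤ ∧ ∀ n, 1 ≤ n → Sgen K n ω = ⊤ → t ≤ n := by
  simp only [tau1, sInf_natCast_setOf_eq_natCast, Sgen_eq_top_iff, and_imp, and_assoc]

lemma tau1_eq_one_iff : tau1 K ω = 1 ↔ Sgen K 1 ω = ⊤ := by
  rw [← Nat.cast_one, tau1_eq_natCast_iff]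
  exact ⟨fun h ↦ h.2.1, fun h ↦ ⟨le_rfl, h, fun _ hn _ ↦ hn⟩⟩

lemma Tgen_add_two (k : ℕ) : Tgen K (k + 2) ω = Tgen K (k + 1) ω + Sk K (k + 1) ω + 1 := rfl

lemma Tgen_succ_eq_add_sum (k : ℕ) :
    Tgen K (k + 1) ω = (k + 1 : ℕ) + ∑ j ∈ Finset.Icc 1 k, Sk K j ω := by
  induction k with
  | zero => simp [Tgen]
  | succ k ih =>
    rw [Tgen_add_two, ih, Finset.sum_Icc_succ_top (by omega)]
    push_cast
    ring

lemma Tgen_succ_ne_top_iff (k : ℕ) :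
    Tgen K (k + 1) ω ≠ ⊤ ↔ ∀ j ∈ Finset.Icc 1 k, Sk K j ω ≠ ⊤ := by
  rw [Tgen_succ_eq_add_sum]
  simp

lemma one_le_Tgen : ∀ k, 1 ≤ Tgen K k ω
  | 0 | 1 => le_rfl
  | k + 2 => by
    rw [Tgen_add_two]
    exact le_add_self

lemma Tgen_add_two_eq_natCast_iff {k t : ℕ} : Tgen K (k + 2) ω = t ↔
    ∃ u s : ℕ, Tgen K (k + 1) ω = u ∧ Sgen K u ω = s ∧ u + s + 1 = t := by
  rw [Tgen_add_two]
  constructor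
  · intro ht
    obtain ⟨u, hu⟩ := ENat.ne_top_iff_exists.1 (fun h ↦ by simp [h] at ht : Tgen K (k + 1) ω ≠ ⊤)
    obtain ⟨s, hs⟩ := ENat.ne_top_iff_exists.1 (fun h ↦ by simp [h] at ht : Sk K (k + 1) ω ≠ ⊤)
    rw [← hu, ← hs] at ht
    rw [Sk, ← hu, ENat.toNat_natCast] at hs
    exact ⟨u, s, hu.symm, hs.symm, by exact_mod_cast ht⟩
  · rintro ⟨u, s, hu, hs, rfl⟩
    rw [Sk, hu, ENat.toNat_natCast, hs]
    push_cast
    rfl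

lemma Ngen_eq_natCast_iff {k : ℕ} :
    Ngen K ω = k ↔ 1 ≤ k ∧ Sk K k ω = ⊤ ∧ Tgen K k ω ≠ ⊤ := by
  rw [Ngen, sInf_natCast_setOf_eq_natCast, and_assoc]
  refine and_congr_right fun hk ↦ and_congr_right fun _ ↦ ?_
  obtain ⟨m, rfl⟩ := Nat.exists_eq_add_of_le' hk
  rw [Tgen_succ_ne_top_iff]
  refine ⟨fun h j hj hj_top ↦ ?_, fun h n hn ↦ ?_⟩
  · have := h j ⟨(Finset.mem_Icc.1 hj).1, hj_top⟩
    simp only [Finset.mem_Icc] at hj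
    omega
  · by_contra hlt
    exact h n (Finset.mem_Icc.2 ⟨hn.1, by omega⟩) hn.2

lemma Ngen_eq_top_iff : Ngen K ω = ⊤ ↔ ∀ k, Tgen K (k + 1) ω ≠ ⊤ := by
  simp only [Ngen, sInf_natCast_setOf_eq_top, Tgen_succ_ne_top_iff, Finset.mem_Icc, not_and]
  exact ⟨fun h k j hj ↦ h j hj.1, fun h j hj ↦ h j j ⟨hj, le_rfl⟩⟩

/-- The witness is the variable at `T_j + S_j` closing the excursion `[T_j, T_{j+1})` that
contains `n`. -/
lemma exists_lt_K_of_lt_Tgen :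
    ∀ (k : ℕ) {t n : ℕ}, Tgen K k ω = t → 1 ≤ n → n < t → ∃ i, i < K (n + i) ω
  | 0, t, n, ht, hn, hnt | 1, t, n, ht, hn, hnt => by
    have ht : (t : ℕ∞) = (1 : ℕ) := ht.symm
    rw [Nat.cast_inj] at ht
    omega
  | k + 2, t, n, ht, hn, hnt => by
    obtain ⟨u, s, hu, hs, rfl⟩ := (Tgen_add_two_eq_natCast_iff K ω).1 ht
    rcases lt_or_ge n u with hnu | hnu
    · exact exists_lt_K_of_lt_Tgen (k + 1) hu hn hnu
    · refine ⟨u + s - n, ?_⟩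
      rw [show n + (u + s - n) = u + s by omega]
      exact lt_of_le_of_lt (by omega) ((Sgen_eq_natCast_iff K ω).1 hs).1

lemma tau1_eq_Tgen_of_Sk_eq_top {k t : ℕ} (ht : Tgen K k ω = t) (hS : Sk K k ω = ⊤) :
    tau1 K ω = t := by
  rw [Sk, ht, ENat.toNat_natCast] at hS
  refine (tau1_eq_natCast_iff K ω).2 ⟨?_, hS, fun n hn hn_top ↦ ?_⟩
  · exact_mod_cast ht ▸ one_le_Tgen K ω k
  · by_contra hlt
    obtain ⟨i, hi⟩ := exists_lt_K_of_lt_Tgen K ω k ht hn (not_le.1 hlt)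
    exact (not_le.2 hi) ((Sgen_eq_top_iff K ω).1 hn_top i)

end Pathwise

abbrev sigmaGen {Ω : Type*} (K : ℕ → Ω → ℕ) (s : Set ℕ) : MeasurableSpace Ω :=
  ⨆ j ∈ s, MeasurableSpace.comap (K j) inferInstance

section Measurability

variable {Ω : Type*} (K : ℕ → Ω → ℕ)

lemma sigmaGen_mono {s s' : Set ℕ} (h : s ⊆ s') : sigmaGen K s ≤ sigmaGen K s' :=
  biSup_mono fun _ hj ↦ h hj

lemma measurableSet_sigmaGen_preimage {s : Set ℕ} {j : ℕ} (hj : j ∈ s) (A : Set ℕ) :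
    MeasurableSet[sigmaGen K s] (K j ⁻¹' A) :=
  le_iSup₂ (f := fun j (_ : j ∈ s) ↦ MeasurableSpace.comap (K j) inferInstance) j hj _
    ⟨A, trivial, rfl⟩

lemma measurableSet_Sgen_eq_top (t : ℕ) :
    MeasurableSet[sigmaGen K (Set.Ici t)] {ω | Sgen K t ω = ⊤} := by
  simp only [Sgen_eq_top_iff, Set.ofPred_forall]
  exact .iInter fun i ↦ measurableSet_sigmaGen_preimage K (by simp) (Set.Iic i)

lemma measurableSet_Sgen_eq_natCast (t s : ℕ) :
    MeasurableSet[sigmaGen K (Set.Iio (t + s + 1))] {ω | Sgen K t ω = s} := by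
  simp only [Sgen_eq_natCast_iff, Set.ofPred_and, Set.ofPred_forall]
  refine .inter (measurableSet_sigmaGen_preimage K (by simp) (Set.Ioi s)) ?_
  exact .iInter fun i ↦ .iInter fun hi ↦
    measurableSet_sigmaGen_preimage K (by simp; omega) (Set.Iic i)

lemma measurableSet_Tgen_eq_natCast :
    ∀ (k t : ℕ), MeasurableSet[sigmaGen K (Set.Iio t)] {ω | Tgen K k ω = t}
  | 0, t | 1, t => .const ((1 : ℕ∞) = t)
  | k + 2, t => by
    have hset : {ω | Tgen K (k + 2) ω = t} = ⋃ u ∈ Finset.range t,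
        {ω | Tgen K (k + 1) ω = u} ∩ {ω | Sgen K u ω = (t - (u + 1) : ℕ)} := by
      ext ω
      simp only [Set.mem_ofPred_eq, Set.mem_iUnion, Set.mem_inter_iff, Finset.mem_range,
        exists_prop, Tgen_add_two_eq_natCast_iff]
      constructor
      · rintro ⟨u, s, hu, hs, rfl⟩
        exact ⟨u, by omega, hu, by rw [hs]; congr 2; omega⟩
      · rintro ⟨u, hu, hTu, hS⟩
        exact ⟨u, _, hTu, hS, by omega⟩
    rw [hset]
    refine .biUnion (Finset.countable_toSet _) fun u hu ↦ .inter ?_ ?_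
    · exact sigmaGen_mono K (Set.Iio_subset_Iio (by simp at hu; omega)) _
        (measurableSet_Tgen_eq_natCast (k + 1) u)
    · exact sigmaGen_mono K (Set.Iio_subset_Iio (by simp at hu; omega)) _
        (measurableSet_Sgen_eq_natCast K u _)

lemma setOf_ne_top_and_Sgen_eq_top (T : Ω → ℕ∞) :
    {ω | T ω ≠ ⊤ ∧ Sgen K (T ω).toNat ω = ⊤} =
      ⋃ t : ℕ, {ω | T ω = t} ∩ {ω | Sgen K t ω = ⊤} := by
  ext ω
  simp only [Set.mem_ofPred_eq, Set.mem_iUnion, Set.mem_inter_iff, ENat.ne_top_iff_exists]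
  constructor
  · rintro ⟨⟨t, ht⟩, hS⟩
    exact ⟨t, ht.symm, by rwa [← ht, ENat.toNat_natCast] at hS⟩
  · rintro ⟨t, ht, hS⟩
    exact ⟨⟨t, ht.symm⟩, by rwa [ht, ENat.toNat_natCast]⟩

lemma pairwise_disjoint_setOf_eq_natCast (T : Ω → ℕ∞) :
    Pairwise (Function.onFun Disjoint fun t : ℕ ↦ {ω | T ω = t}) :=
  fun _ _ hij ↦ Set.disjoint_left.2 fun _ hi hj ↦ hij (by exact_mod_cast hi.symm.trans hj)

end Measurability

section Probability

variable {Ω : Type*} [MeasurableSpace Ω] {P : Measure Ω} {K : ℕ → Ω → ℕ}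

lemma sigmaGen_le (hmeas : ∀ n, Measurable (K n)) (s : Set ℕ) :
    sigmaGen K s ≤ ‹MeasurableSpace Ω› :=
  iSup₂_le fun j _ ↦ (hmeas j).comap_le

lemma measure_inter_Sgen_eq_top (hmeas : ∀ n, Measurable (K n)) (hindep : iIndepFun K P)
    {t : ℕ} {A : Set Ω} (hA : MeasurableSet[sigmaGen K (Set.Iio t)] A) :
    P (A ∩ {ω | Sgen K t ω = ⊤}) = P A * P {ω | Sgen K t ω = ⊤} :=
  (Indep_iff _ _ P).1 (indep_iSup_of_disjoint (fun j ↦ (hmeas j).comap_le) hindep.iIndep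
    (Set.Iio_disjoint_Ici le_rfl)) A _ hA (measurableSet_Sgen_eq_top K t)

lemma measure_Sgen_eq_top_eq_infinitePi (hmeas : ∀ n, Measurable (K n))
    (hindep : iIndepFun K P) (hident : ∀ n, P.map (K n) = P.map (K 0)) (t : ℕ) :
    P {ω | Sgen K t ω = ⊤} =
      Measure.infinitePi (fun _ ↦ P.map (K 0)) {x : ℕ → ℕ | ∀ i, x i ≤ i} := by
  have hlaw := (hindep.precomp (add_right_injective t)).map_fun_eq_infinitePi_map
    (fun i ↦ hmeas (t + i))
  simp only [hident] at hlaw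
  rw [← hlaw, Measure.map_apply (by fun_prop) (by measurability)]
  congr 1 with ω
  exact Sgen_eq_top_iff K ω

lemma measurableSet_ne_top_and_Sgen_eq_top (hmeas : ∀ n, Measurable (K n)) {T : Ω → ℕ∞}
    (hT : ∀ t : ℕ, MeasurableSet[sigmaGen K (Set.Iio t)] {ω | T ω = t}) :
    MeasurableSet {ω | T ω ≠ ⊤ ∧ Sgen K (T ω).toNat ω = ⊤} := by
  rw [setOf_ne_top_and_Sgen_eq_top]
  exact .iUnion fun t ↦ (sigmaGen_le hmeas _ _ (hT t)).inter
    (sigmaGen_le hmeas _ _ (measurableSet_Sgen_eq_top K t))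

variable (hmeas : ∀ n, Measurable (K n)) (hindep : iIndepFun K P)
  (hident : ∀ n, P.map (K n) = P.map (K 0))
include hmeas hindep hident

/-- Strong Markov property of the renewal structure at a stopping time `T`. -/
lemma measure_ne_top_and_Sgen_eq_top {T : Ω → ℕ∞}
    (hT : ∀ t : ℕ, MeasurableSet[sigmaGen K (Set.Iio t)] {ω | T ω = t}) :
    P {ω | T ω ≠ ⊤ ∧ Sgen K (T ω).toNat ω = ⊤} =
      P {ω | T ω ≠ ⊤} * P {ω | Sgen K 1 ω = ⊤} := by
  have hTmeas t := sigmaGen_le hmeas _ _ (hT t)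
  have hne_top : {ω | T ω ≠ ⊤} = ⋃ t : ℕ, {ω | T ω = t} := by
    ext ω
    simp [ENat.ne_top_iff_exists, eq_comm]
  rw [setOf_ne_top_and_Sgen_eq_top, hne_top,
    measure_iUnion (fun i j hij ↦ (pairwise_disjoint_setOf_eq_natCast T hij).mono
      Set.inter_subset_left Set.inter_subset_left)
      (fun t ↦ (hTmeas t).inter (sigmaGen_le hmeas _ _ (measurableSet_Sgen_eq_top K t))),
    measure_iUnion (pairwise_disjoint_setOf_eq_natCast T) hTmeas, ← ENNReal.tsum_mul_right]
  congr with t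
  rw [measure_inter_Sgen_eq_top hmeas hindep (hT t),
    measure_Sgen_eq_top_eq_infinitePi hmeas hindep hident,
    measure_Sgen_eq_top_eq_infinitePi hmeas hindep hident]

lemma measure_Tgen_ne_top_and_Sk_eq_top (k : ℕ) :
    P {ω | Tgen K k ω ≠ ⊤ ∧ Sk K k ω = ⊤} =
      P {ω | Tgen K k ω ≠ ⊤} * P {ω | Sgen K 1 ω = ⊤} :=
  measure_ne_top_and_Sgen_eq_top hmeas hindep hident (measurableSet_Tgen_eq_natCast K k)

variable [IsProbabilityMeasure P]

lemma measure_Tgen_succ_ne_top (k : ℕ) :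
    P {ω | Tgen K (k + 1) ω ≠ ⊤} = (1 - P {ω | Sgen K 1 ω = ⊤}) ^ k := by
  induction k with
  | zero => simp [Tgen]
  | succ k ih =>
    set A := {ω | Tgen K (k + 1) ω ≠ ⊤}
    set E := {ω | Tgen K (k + 1) ω ≠ ⊤ ∧ Sk K (k + 1) ω = ⊤}
    have hdiff : {ω | Tgen K (k + 2) ω ≠ ⊤} = A \ E := by
      ext ω
      simp only [Set.mem_ofPred_eq, Set.mem_sdiff, Tgen_add_two, ne_eq, ENat.add_eq_top,
        ENat.one_ne_top, or_false, not_or, A, E]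
      tauto
    have hE : P E = P A * P {ω | Sgen K 1 ω = ⊤} :=
      measure_Tgen_ne_top_and_Sk_eq_top hmeas hindep hident (k + 1)
    have hEmeas : MeasurableSet E :=
      measurableSet_ne_top_and_Sgen_eq_top hmeas (measurableSet_Tgen_eq_natCast K _)
    rw [hdiff, measure_sdiff (show E ⊆ A from fun _ hω ↦ hω.1) hEmeas.nullMeasurableSet
      (measure_ne_top P E), hE, pow_succ, ← ih,
      ENNReal.mul_sub fun _ _ ↦ measure_ne_top P A, mul_one]

lemma measure_Ngen_eq_natCast {k : ℕ} (hk : 1 ≤ k) :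
    P {ω | Ngen K ω = k} =
      P {ω | Sgen K 1 ω = ⊤} * (1 - P {ω | Sgen K 1 ω = ⊤}) ^ (k - 1) := by
  obtain ⟨m, rfl⟩ := Nat.exists_eq_add_of_le' hk
  have hN : {ω | Ngen K ω = (m + 1 : ℕ)} =
      {ω | Tgen K (m + 1) ω ≠ ⊤ ∧ Sk K (m + 1) ω = ⊤} := by
    ext ω
    simp only [Set.mem_ofPred_eq, Ngen_eq_natCast_iff, hk, true_and, and_comm]
  rw [hN, measure_Tgen_ne_top_and_Sk_eq_top hmeas hindep hident,
    measure_Tgen_succ_ne_top hmeas hindep hident,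
    Nat.add_sub_cancel, mul_comm]

lemma measure_Ngen_eq_top (hp : P {ω | Sgen K 1 ω = ⊤} ≠ 0) : P {ω | Ngen K ω = ⊤} = 0 := by
  have hle k : P {ω | Ngen K ω = ⊤} ≤ (1 - P {ω | Sgen K 1 ω = ⊤}) ^ k :=
    measure_Tgen_succ_ne_top hmeas hindep hident k ▸
      measure_mono fun ω hω ↦ (Ngen_eq_top_iff K ω).1 hω k
  exact le_antisymm (ge_of_tendsto' (ENNReal.tendsto_pow_atTop_nhds_zero_of_lt_one
    (ENNReal.sub_lt_self ENNReal.one_ne_top one_ne_zero hp)) hle) bot_le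

end Probability

/-- If `P(τ₁ = 1) > 0` then `N` is geometric with success parameter
`P(τ₁ = 1)`, i.e. `P(N = k) = P(τ₁ = 1)·(1 − P(τ₁ = 1))^{k−1}` for all `k ≥ 1`; moreover,
almost surely `τ₁ = T_N = N + Σ_{k=1}^{N−1} S_k`. -/
theorem tau1_geometric_structure {Ω : Type*} [MeasurableSpace Ω] (P : Measure Ω)
    [IsProbabilityMeasure P] (K : ℕ → Ω → ℕ) (hmeas : ∀ n, Measurable (K n))
    (hindep : iIndepFun K P)
    (hident : ∀ n, P.map (K n) = P.map (K 0))
    (hpos : 0 < P {ω | tau1 K ω = 1}) :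
    (∀ k : ℕ, 1 ≤ k →
        P {ω | Ngen K ω = (k : ℕ∞)} =
          P {ω | tau1 K ω = 1} * (1 - P {ω | tau1 K ω = 1}) ^ (k - 1)) ∧
      (∀ᵐ ω ∂P, ∃ k : ℕ, 1 ≤ k ∧ Ngen K ω = (k : ℕ∞) ∧
        tau1 K ω = Tgen K k ω ∧
        tau1 K ω = (k : ℕ∞) + ∑ j ∈ Finset.Icc 1 (k - 1), Sk K j ω) := by
  have hp : {ω | tau1 K ω = 1} = {ω | Sgen K 1 ω = ⊤} := Set.ext (tau1_eq_one_iff K)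
  rw [hp] at hpos ⊢
  refine ⟨fun k hk ↦ measure_Ngen_eq_natCast hmeas hindep hident hk, ?_⟩
  have hN : ∀ᵐ ω ∂P, Ngen K ω ≠ ⊤ :=
    ae_iff.2 (by simpa using measure_Ngen_eq_top hmeas hindep hident hpos.ne')
  filter_upwards [hN] with ω hω
  obtain ⟨k, hk⟩ := ENat.ne_top_iff_exists.1 hω
  obtain ⟨hk1, hS, hT⟩ := (Ngen_eq_natCast_iff K ω).1 hk.symm
  obtain ⟨t, ht⟩ := ENat.ne_top_iff_exists.1 hT
  have htau := tau1_eq_Tgen_of_Sk_eq_top K ω ht.symm hS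
  refine ⟨k, hk1, hk.symm, htau.trans ht, ?_⟩
  obtain ⟨m, rfl⟩ := Nat.exists_eq_add_of_le' hk1
  rw [htau, ht, Tgen_succ_eq_add_sum, Nat.add_sub_cancel]
end

section
/- Suppose P(D₀) > 0. Then for every integer n ≥ 1, P(D_n | D₀) = P(K_i ≤ i for all 0 ≤ i ≤ n−1); in particular P(D_n | D₀) ≥ P(D₀) > 0. -/
open MeasureTheory ProbabilityTheory Filter ENNReal
open scoped Topology ProbabilityTheory

/-- `D_n := {K_{n+i} ≤ i for all i ≥ 0}`, the event that `n` is a regeneration time. -/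
def regEvent {Ω : Type*} (K : ℕ → Ω → ℕ) (n : ℕ) : Set Ω :=
  {ω | ∀ i : ℕ, K (n + i) ω ≤ i}

/-! On `D_n` the constraints `K_{n+i} ≤ i` already imply `K_j ≤ j` for all `j ≥ n`, so
`D₀ ∩ D_n = {K_i ≤ i for i < n} ∩ D_n`. The first event depends on `K_0, …, K_{n-1}` and the
second on `K_n, K_{n+1}, …`, hence they are independent; and `P(D_n) = P(D₀)` because the shifted
sequence `(K_{n+i})_i` has the same law as `(K_i)_i`, both being the infinite product of the
common marginal. Dividing `P(D₀ ∩ D_n) = P(K_i ≤ i, i < n) · P(D₀)` by `P(D₀)` gives the claim. -/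

theorem ProbabilityTheory.iIndepFun.map_shift_eq {Ω β : Type*} [MeasurableSpace Ω]
    [MeasurableSpace β] {P : Measure Ω} {K : ℕ → Ω → β} (hmeas : ∀ n, Measurable (K n))
    (hindep : iIndepFun K P) (hident : ∀ n, P.map (K n) = P.map (K 0)) (n : ℕ) :
    P.map (fun ω i ↦ K (n + i) ω) = P.map (fun ω i ↦ K i ω) := by
  rw [(hindep.precomp (add_right_injective n)).map_fun_eq_infinitePi_map fun i ↦ hmeas _,
    hindep.map_fun_eq_infinitePi_map hmeas]
  simp only [hident]

theorem measurableSet_iSup_comap_preimage {Ω ι β : Type*} [MeasurableSpace β] {K : ι → Ω → β}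
    {S : Set ι} {i : ι} (hi : i ∈ S) {t : Set β} (ht : MeasurableSet t) :
    MeasurableSet[⨆ j ∈ S, MeasurableSpace.comap (K j) inferInstance] (K i ⁻¹' t) :=
  le_iSup₂ (f := fun j (_ : j ∈ S) ↦ MeasurableSpace.comap (K j) inferInstance) i hi _
    ⟨t, ht, rfl⟩

section

variable {Ω : Type*} {K : ℕ → Ω → ℕ}

theorem regEvent_eq_iInter (n : ℕ) : regEvent K n = ⋂ i, K (n + i) ⁻¹' Set.Iic i := by
  ext
  simp [regEvent]

theorem regEvent_zero_inter_regEvent (n : ℕ) :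
    regEvent K 0 ∩ regEvent K n = {ω | ∀ i < n, K i ω ≤ i} ∩ regEvent K n := by
  ext ω
  refine ⟨fun ⟨h0, hn⟩ ↦ ⟨fun i _ ↦ by simpa using h0 i, hn⟩, fun ⟨hpast, hn⟩ ↦ ⟨fun i ↦ ?_, hn⟩⟩
  rcases lt_or_ge i n with hi | hi
  · simpa using hpast i hi
  · simpa [Nat.add_sub_cancel' hi] using (hn (i - n)).trans (Nat.sub_le i n)

theorem regEvent_zero_subset (n : ℕ) : regEvent K 0 ⊆ {ω | ∀ i < n, K i ω ≤ i} :=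
  fun ω hω i _ ↦ by simpa using hω i

variable [MeasurableSpace Ω] {P : Measure Ω}

theorem measurableSet_regEvent (hmeas : ∀ n, Measurable (K n)) (n : ℕ) :
    MeasurableSet (regEvent K n) := by
  rw [regEvent_eq_iInter]
  exact MeasurableSet.iInter fun i ↦ hmeas _ measurableSet_Iic

theorem measure_regEvent_eq (hmeas : ∀ n, Measurable (K n)) (hindep : iIndepFun K P)
    (hident : ∀ n, P.map (K n) = P.map (K 0)) (n : ℕ) :
    P (regEvent K n) = P (regEvent K 0) := by
  have hS : MeasurableSet {x : ℕ → ℕ | ∀ i, x i ≤ i} := by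
    simp only [Set.ofPred_forall]
    exact MeasurableSet.iInter fun i ↦ measurable_pi_apply i measurableSet_Iic
  have hlaw : ∀ m, P (regEvent K m) = P.map (fun ω i ↦ K (m + i) ω) {x | ∀ i, x i ≤ i} :=
    fun m ↦ (Measure.map_apply (measurable_pi_lambda _ fun i ↦ hmeas _) hS).symm
  rw [hlaw, hlaw, hindep.map_shift_eq hmeas hident, hindep.map_shift_eq hmeas hident]

theorem measure_inter_regEvent (hmeas : ∀ n, Measurable (K n)) (hindep : iIndepFun K P)
    (n : ℕ) :
    P ({ω | ∀ i < n, K i ω ≤ i} ∩ regEvent K n) =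
      P {ω | ∀ i < n, K i ω ≤ i} * P (regEvent K n) := by
  have hpast : MeasurableSet[⨆ i ∈ Set.Iio n, MeasurableSpace.comap (K i) inferInstance]
      {ω | ∀ i < n, K i ω ≤ i} := by
    have h : {ω | ∀ i < n, K i ω ≤ i} = ⋂ i ∈ Set.Iio n, K i ⁻¹' Set.Iic i := by ext; simp
    rw [h]
    exact MeasurableSet.biInter (Set.to_countable _) fun i hi ↦
      measurableSet_iSup_comap_preimage hi measurableSet_Iic
  have hfuture : MeasurableSet[⨆ i ∈ Set.Ici n, MeasurableSpace.comap (K i) inferInstance]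
      (regEvent K n) := by
    rw [regEvent_eq_iInter]
    exact MeasurableSet.iInter fun i ↦
      measurableSet_iSup_comap_preimage (Set.mem_Ici.2 (Nat.le_add_right n i)) measurableSet_Iic
  exact (Indep_iff _ _ P).1 (indep_iSup_of_disjoint (fun i ↦ (hmeas i).comap_le)
    hindep.iIndep (Set.Iio_disjoint_Ici le_rfl)) _ _ hpast hfuture

end

/-- If `P(D₀) > 0`, then for every `n ≥ 1`,
`P(D_n | D₀) = P(K_i ≤ i for all 0 ≤ i ≤ n−1)`; in particular `P(D_n | D₀) ≥ P(D₀) > 0`. -/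
theorem cond_regEvent {Ω : Type*} [MeasurableSpace Ω] (P : Measure Ω)
    [IsProbabilityMeasure P] (K : ℕ → Ω → ℕ) (hmeas : ∀ n, Measurable (K n))
    (hindep : iIndepFun K P)
    (hident : ∀ n, P.map (K n) = P.map (K 0))
    (hpos : 0 < P (regEvent K 0)) :
    ∀ n : ℕ, 1 ≤ n →
      P[regEvent K n | regEvent K 0] = P {ω | ∀ i < n, K i ω ≤ i} ∧
        P (regEvent K 0) ≤ P[regEvent K n | regEvent K 0] := by
  intro n _
  have hcond : P[regEvent K n | regEvent K 0] = P {ω | ∀ i < n, K i ω ≤ i} := by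
    rw [cond_apply (measurableSet_regEvent hmeas 0), regEvent_zero_inter_regEvent,
      measure_inter_regEvent hmeas hindep, measure_regEvent_eq hmeas hindep hident n, mul_comm,
      ENNReal.mul_inv_cancel_right hpos.ne' (measure_ne_top _ _)]
  exact ⟨hcond, hcond ▸ measure_mono (regEvent_zero_subset n)⟩
end

section
/- Suppose E[K₀] < ∞. Let R₀ := 0 and R_i := inf{n > R_{i−1} : X_n = 0} be the successive return times of the walk to the origin, let D_n := {K_{n+i} ≤ i for all i ≥ 0} be the event that n is a regeneration time, and let P̄(·) := P(· | D₀). Then for every i ≥ 1, P̄( for all k ≥ i: R_k < ∞ and D_{R_k} does not occur ) = 0; that is, under P̄ it is almost surely impossible that the walk returns to 0 infinitely often with all but finitely many of these return times failing to be regeneration times. -/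
/-!
Fix `L` and follow the returns `R_i, R_{i+L}, R_{i+2L}, …`, which are at least `L` apart. If
`D_R` fails at such a return `R`, then either `K_{R+j} > j` for some `j < L`, or for some
`j ≥ L`. Given the past, the first happens with probability `1 - ∏_{j<L} P(K₀ ≤ j) ≤ 1 - c`,
where `c > 0` does not depend on `L` because `∑ⱼ P(K₀ > j) ≤ E[K₀] < ∞` and `P(K₀ = 0) > 0`;
the windows `[R, R + L)` being disjoint, `T` such failures in a row have probability at most
`(1 - c)^T`. The second has probability at most `∑_{j ≥ L} P(K₀ > j)` at each return. Hence
the event has probability at most `(1 - c)^T + T ∑_{j ≥ L} P(K₀ > j)`; letting `L → ∞` and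
then `T → ∞` shows it is null under `P`, hence under `P(· | D₀)`.
-/

open MeasureTheory ProbabilityTheory Filter ENNReal
open scoped Classical

/-- `y` is a nearest neighbor of `x` in `ℤ^d`. -/
def IsNeighbor {d : ℕ} (x y : Fin d → ℤ) : Prop := (∑ i, |x i - y i|) = 1

/-- The `p`-th neighbor of `x` (for `p : Fin d × Bool`): `x ± e_i`. -/
def nbr {d : ℕ} (x : Fin d → ℤ) (p : Fin d × Bool) : Fin d → ℤ :=
  Function.update x p.1 (x p.1 + if p.2 then 1 else -1)

/-- The undirected edge `{a, b}` belongs to the set `R_{n,m}` of the last `m` edges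
traversed (by time `n`) by the path `x`. -/
def InRecentRange {d : ℕ} (x : ℕ → Fin d → ℤ) (n m : ℕ) (a b : Fin d → ℤ) : Prop :=
  ∃ i : ℕ, 1 ≤ i ∧ i ≤ n ∧ n + 1 ≤ i + m ∧ ({x (i - 1), x i} : Set (Fin d → ℤ)) = {a, b}

/-- Indicator (as a real number) of the edge `{a,b}` being in `R_{n,m}`. -/
noncomputable def indR {d : ℕ} (x : ℕ → Fin d → ℤ) (n m : ℕ) (a b : Fin d → ℤ) : ℝ :=
  if InRecentRange x n m a b then 1 else 0

/-- The event that the walk/memory history up to time `n` is given by `(x, k)`;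
these events generate the σ-algebra `F_n = σ(X_i, K_i : i ≤ n)`. -/
def HistEvent {Ω : Type*} {d : ℕ} (X : ℕ → Ω → Fin d → ℤ) (K : ℕ → Ω → ℕ)
    (n : ℕ) (x : ℕ → Fin d → ℤ) (k : ℕ → ℕ) : Set Ω :=
  {ω | (∀ i ≤ n, X i ω = x i) ∧ (∀ i ≤ n, K i ω = k i)}

/-- The random memory walk on `ℤ^d` with reinforcement parameter `δ`, driven by the
i.i.d. memory sequence `(K_n)` with `P(K₀ = 0) > 0`. -/
structure IsRandomMemoryWalk {Ω : Type*} [MeasurableSpace Ω] (d : ℕ) (P : Measure Ω)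
    (δ : ℝ) (X : ℕ → Ω → Fin d → ℤ) (K : ℕ → Ω → ℕ) : Prop where
  isProb : IsProbabilityMeasure P
  hδ : 0 < δ
  measX : ∀ n, Measurable (X n)
  measK : ∀ n, Measurable (K n)
  /-- `(K_n)` is an independent family. -/
  indepK : iIndepFun K P
  /-- `(K_n)` are identically distributed. -/
  identK : ∀ n, P.map (K n) = P.map (K 0)
  /-- `P(K₀ = 0) > 0`. -/
  posK0 : 0 < P {ω | K 0 ω = 0}
  /-- The walk starts at the origin. -/
  init : ∀ ω, X 0 ω = 0
  /-- `K_n` is independent of `σ(X_i : i ≤ n ; K_j : j < n)`. -/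
  memIndep : ∀ n : ℕ, IndepFun (K n)
      (fun ω => (fun i : Fin (n + 1) => X i ω, fun j : Fin n => K j ω)) P
  /-- The jump distribution: conditionally on the history `F_n`, the walk jumps from
  `X_n` to a neighbor `y` with probability proportional to `1 + δ · 1{{X_n,y} ∈ R_{n,K_n}}`. -/
  jump : ∀ (n : ℕ) (x : ℕ → Fin d → ℤ) (k : ℕ → ℕ) (y : Fin d → ℤ),
      IsNeighbor (x n) y → 0 < P (HistEvent X K n x k) →
      P ({ω | X (n + 1) ω = y} ∩ HistEvent X K n x k) / P (HistEvent X K n x k)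
        = ENNReal.ofReal ((1 + δ * indR x n (k n) (x n) y) /
            ∑ p : Fin d × Bool, (1 + δ * indR x n (k n) (x n) (nbr (x n) p)))

open scoped ProbabilityTheory

/-- The regeneration times: `τ₀ := 0` and
`τ_n := inf {m > τ_{n−1} : K_{m+i} ≤ i for all i ≥ 0}` (with `inf ∅ = ∞`). -/
noncomputable def regTime {Ω : Type*} (K : ℕ → Ω → ℕ) : ℕ → Ω → ℕ∞
  | 0, _ => 0
  | (n + 1), ω =>
      sInf {m : ℕ∞ | ∃ j : ℕ, m = (j : ℕ∞) ∧ regTime K n ω < (j : ℕ∞) ∧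
        ∀ i : ℕ, K (j + i) ω ≤ i}

/-- `D₀ := {K_i ≤ i for all i ≥ 0}`, the event that `0` is a regeneration time. -/
def regZero {Ω : Type*} (K : ℕ → Ω → ℕ) : Set Ω := {ω | ∀ i : ℕ, K i ω ≤ i}
/-- The successive return times to the origin: `R₀ := 0` and
`R_i := inf {n > R_{i−1} : X_n = 0}` (with `inf ∅ = ∞`). -/
noncomputable def retTime {Ω : Type*} {d : ℕ} (X : ℕ → Ω → Fin d → ℤ) : ℕ → Ω → ℕ∞
  | 0, _ => 0
  | (i + 1), ω =>
      sInf {m : ℕ∞ | ∃ n : ℕ, m = (n : ℕ∞) ∧ retTime X i ω < (n : ℕ∞) ∧ X n ω = 0}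

open Finset
open scoped Function Topology

section History

variable {Ω : Type*} {d : ℕ} (X : ℕ → Ω → Fin d → ℤ) (K : ℕ → Ω → ℕ)

def historyMap (n : ℕ) (ω : Ω) : (Fin (n + 1) → Fin d → ℤ) × (Fin n → ℕ) :=
  (fun i => X i ω, fun j => K j ω)

/-- `σ(X_i, K_j : i ≤ n, j < n)`, the information available when `K_n` is drawn. -/
abbrev history (n : ℕ) : MeasurableSpace Ω :=
  MeasurableSpace.comap (historyMap X K n) inferInstance

lemma history_mono {n m : ℕ} (h : n ≤ m) : history X K n ≤ history X K m := by
  rintro _ ⟨B, -, rfl⟩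
  exact ⟨(fun p : (Fin (m + 1) → Fin d → ℤ) × (Fin m → ℕ) =>
    ((fun i => p.1 (Fin.castLE (by omega) i), fun j => p.2 (Fin.castLE h j)) :
      (Fin (n + 1) → Fin d → ℤ) × (Fin n → ℕ))) ⁻¹' B, .of_discrete, rfl⟩

lemma history_le [MeasurableSpace Ω] (hX : ∀ n, Measurable (X n))
    (hK : ∀ n, Measurable (K n)) (n : ℕ) :
    history X K n ≤ ‹MeasurableSpace Ω› :=
  Measurable.comap_le <| show Measurable (historyMap X K n) from
    (measurable_pi_lambda _ fun i : Fin (n + 1) => hX i).prodMk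
      (measurable_pi_lambda _ fun j : Fin n => hK j)

lemma measurableSet_history_preimage_X {t n : ℕ} (h : t ≤ n) (A : Set (Fin d → ℤ)) :
    MeasurableSet[history X K n] (X t ⁻¹' A) :=
  ⟨{p | p.1 ⟨t, by omega⟩ ∈ A}, .of_discrete, rfl⟩

lemma measurableSet_history_preimage_K {t n : ℕ} (h : t < n) (A : Set ℕ) :
    MeasurableSet[history X K n] (K t ⁻¹' A) :=
  ⟨{p | p.2 ⟨t, h⟩ ∈ A}, .of_discrete, rfl⟩

/-- The first `L` of the constraints `K_{n+j} ≤ j` that make up the regeneration event `D_n`. -/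
def regenUpTo (L n : ℕ) : Set Ω := ⋂ j ∈ range L, K (n + j) ⁻¹' Set.Iic j

lemma measurableSet_history_regenUpTo (L n : ℕ) :
    MeasurableSet[history X K (n + L)] (regenUpTo K L n) :=
  Finset.measurableSet_biInter _ fun j hj =>
    measurableSet_history_preimage_K X K (by simp at hj; omega) _

end History

section Independence

variable {Ω : Type*} [MeasurableSpace Ω] {d : ℕ} {P : Measure Ω}
  {X : ℕ → Ω → Fin d → ℤ} {K : ℕ → Ω → ℕ}

lemma measure_inter_preimage_K (hMI : ∀ n, IndepFun (K n) (historyMap X K n) P) {n : ℕ}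
    {S : Set Ω} (hS : MeasurableSet[history X K n] S) (A : Set ℕ) :
    P (S ∩ K n ⁻¹' A) = P S * P (K n ⁻¹' A) := by
  obtain ⟨B, hB, rfl⟩ := hS
  rw [Set.inter_comm, (hMI n).measure_inter_preimage_eq_mul _ _ .of_discrete hB, mul_comm]

lemma measure_inter_biInter_preimage_K (hMI : ∀ n, IndepFun (K n) (historyMap X K n) P)
    {n : ℕ} {S : Set Ω} (hS : MeasurableSet[history X K n] S) (m : ℕ) (A : ℕ → Set ℕ) :
    P (S ∩ ⋂ j ∈ range m, K (n + j) ⁻¹' A j) = P S * ∏ j ∈ range m, P (K (n + j) ⁻¹' A j) := by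
  induction m with
  | zero => simp
  | succ m ih =>
    have hmeas : MeasurableSet[history X K (n + m)] (S ∩ ⋂ j ∈ range m, K (n + j) ⁻¹' A j) :=
      (history_mono X K (Nat.le_add_right n m) _ hS).inter <| Finset.measurableSet_biInter _
        fun j hj => measurableSet_history_preimage_K X K (by simp at hj; omega) _
    rw [range_add_one, set_biInter_insert, Set.inter_left_comm, Set.inter_comm,
      measure_inter_preimage_K hMI hmeas, ih, prod_insert (by simp)]
    ring

lemma measure_preimage_K_eq (hK : ∀ n, Measurable (K n)) (hid : ∀ n, P.map (K n) = P.map (K 0))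
    (n : ℕ) (A : Set ℕ) : P (K n ⁻¹' A) = P (K 0 ⁻¹' A) := by
  rw [← Measure.map_apply (hK n) .of_discrete, hid n, Measure.map_apply (hK 0) .of_discrete]

lemma measure_inter_regenUpTo (hK : ∀ n, Measurable (K n))
    (hMI : ∀ n, IndepFun (K n) (historyMap X K n) P) (hid : ∀ n, P.map (K n) = P.map (K 0))
    {n : ℕ} {S : Set Ω} (hS : MeasurableSet[history X K n] S) (L : ℕ) :
    P (S ∩ regenUpTo K L n) = P S * ∏ j ∈ range L, P {ω | K 0 ω ≤ j} := by
  rw [regenUpTo, measure_inter_biInter_preimage_K hMI hS]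
  simp_rw [measure_preimage_K_eq hK hid]
  rfl

end Independence

section ReturnTimes

variable {Ω : Type*} {d : ℕ} {X : ℕ → Ω → Fin d → ℤ}

lemma retTime_succ_eq_iff {k n : ℕ} {ω : Ω} :
    retTime X (k + 1) ω = n ↔ ∃ m : ℕ, retTime X k ω = m ∧ m < n ∧ X n ω = 0 ∧
      ∀ t : ℕ, m < t → t < n → X t ω ≠ 0 := by
  rw [retTime]
  set S := {r : ℕ∞ | ∃ j : ℕ, r = j ∧ retTime X k ω < j ∧ X j ω = 0}
  have hleast : sInf S = n ↔ IsLeast S n := by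
    refine ⟨fun h => ?_, IsLeast.csInf_eq⟩
    have hS : S.Nonempty := Set.nonempty_iff_ne_empty.2 fun h' => by simp [h'] at h
    exact h ▸ ⟨csInf_mem hS, fun r hr => sInf_le hr⟩
  rw [hleast]
  constructor
  · rintro ⟨⟨j, hj, hlt, hX⟩, hmin⟩
    obtain rfl : n = j := by exact_mod_cast hj
    obtain ⟨m, hm⟩ := ENat.ne_top_iff_exists.1 (hlt.trans (ENat.natCast_lt_top n)).ne
    refine ⟨m, hm.symm, by rw [← hm] at hlt; exact_mod_cast hlt, hX, fun t hmt htn hXt => ?_⟩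
    have := hmin ⟨t, rfl, by rw [← hm]; exact_mod_cast hmt, hXt⟩
    exact absurd (by exact_mod_cast this : n ≤ t) (not_le.2 htn)
  · rintro ⟨m, hm, hmn, hX, hgap⟩
    refine ⟨⟨n, rfl, by rw [hm]; exact_mod_cast hmn, hX⟩, ?_⟩
    rintro _ ⟨t, rfl, hlt, hXt⟩
    rw [hm] at hlt
    by_contra! htn
    exact hgap t (by exact_mod_cast hlt) (by exact_mod_cast htn) hXt

lemma retTime_add_one_le (k : ℕ) (ω : Ω) : retTime X k ω + 1 ≤ retTime X (k + 1) ω := by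
  by_cases htop : retTime X (k + 1) ω = ⊤
  · exact htop ▸ le_top
  obtain ⟨n, h⟩ := ENat.ne_top_iff_exists.1 htop
  obtain ⟨m, hm, hmn, -⟩ := retTime_succ_eq_iff.1 h.symm
  rw [hm, ← h]
  exact_mod_cast hmn

lemma retTime_add_le (k L : ℕ) (ω : Ω) : retTime X k ω + L ≤ retTime X (k + L) ω := by
  induction L with
  | zero => simp
  | succ L ih =>
    calc retTime X k ω + ↑(L + 1) = retTime X k ω + L + 1 := by push_cast; ring
      _ ≤ retTime X (k + L) ω + 1 := by gcongr
      _ ≤ retTime X (k + (L + 1)) ω := retTime_add_one_le _ ω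

variable (K : ℕ → Ω → ℕ)

lemma measurableSet_history_retTime_eq (k n : ℕ) :
    MeasurableSet[history X K n] {ω | retTime X k ω = n} := by
  induction k generalizing n with
  | zero => simp only [retTime]; exact MeasurableSet.const _
  | succ k ih =>
    have hunion : {ω | retTime X (k + 1) ω = n} = ⋃ m ∈ range n,
        {ω | retTime X k ω = m} ∩ X n ⁻¹' {0} ∩ ⋂ t ∈ Ioo m n, (X t ⁻¹' {0})ᶜ := by
      ext ω
      simp only [Set.mem_ofPred_eq, retTime_succ_eq_iff, Set.mem_iUnion, Set.mem_inter_iff,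
        Set.mem_iInter, Set.mem_preimage, Set.mem_singleton_iff, Set.mem_compl_iff, mem_range,
        mem_Ioo, exists_prop]
      grind
    rw [hunion]
    refine Finset.measurableSet_biUnion _ fun m hm => .inter (.inter ?_ ?_) ?_
    · exact history_mono X K (mem_range.1 hm).le _ (ih m)
    · exact measurableSet_history_preimage_X X K le_rfl _
    · exact Finset.measurableSet_biInter _ fun t ht =>
        (measurableSet_history_preimage_X X K (mem_Ioo.1 ht).2.le _).compl

end ReturnTimes

section Failures

variable {Ω : Type*} {d : ℕ} (X : ℕ → Ω → Fin d → ℤ) (K : ℕ → Ω → ℕ) (τ : ℕ → Ω → ℕ∞) (L : ℕ)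

/-- `τ t = n`, and regeneration already fails within `L` steps at each of `τ 1, …, τ t`.
The windows `[τ s, τ s + L)` are kept disjoint, which makes these failures independent. -/
def failsAlong : ℕ → ℕ → Set Ω
  | 0, n => {ω | τ 0 ω = n}
  | t + 1, n =>
    ({ω | τ (t + 1) ω = n} ∩ ⋃ (m : ℕ) (_ : m + L ≤ n), failsAlong t m) \ regenUpTo K L n

def lateFailure (σ : Ω → ℕ∞) : Set Ω := {ω | ∃ n j : ℕ, σ ω = n ∧ j + L < K (n + (j + L)) ω}

variable {X K τ L}

lemma measurableSet_history_failsAlong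
    (hτ : ∀ t n, MeasurableSet[history X K n] {ω | τ t ω = n}) (t n : ℕ) :
    MeasurableSet[history X K (n + L)] (failsAlong K τ L t n) := by
  induction t generalizing n with
  | zero => exact history_mono X K (Nat.le_add_right n L) _ (hτ 0 n)
  | succ t ih =>
    refine .diff (.inter ?_ (.iUnion fun m => .iUnion fun hm => ?_)) ?_
    · exact history_mono X K (Nat.le_add_right n L) _ (hτ _ n)
    · exact history_mono X K (by omega) _ (ih m)
    · exact measurableSet_history_regenUpTo X K L n

lemma mem_failsAlong (hgap : ∀ t ω, τ t ω + L ≤ τ (t + 1) ω)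
    {ω : Ω} {t : ℕ} (hfin : ∀ s ≤ t, τ s ω ≠ ⊤)
    (hfail : ∀ s, 1 ≤ s → s ≤ t → ω ∉ regenUpTo K L (τ s ω).toNat) :
    ω ∈ failsAlong K τ L t (τ t ω).toNat := by
  induction t with
  | zero => exact (ENat.natCast_toNat (hfin 0 le_rfl)).symm
  | succ t ih =>
    have hτt := ENat.natCast_toNat (hfin (t + 1) le_rfl)
    obtain ⟨m, hm⟩ := ENat.ne_top_iff_exists.1 (hfin t (by omega))
    have hmn : m + L ≤ (τ (t + 1) ω).toNat := by
      have := hgap t ω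
      rw [← hm, ← hτt] at this
      exact_mod_cast this
    have hprev := ih (fun s hs => hfin s (by omega)) fun s hs hst => hfail s hs (by omega)
    rw [← hm, ENat.toNat_natCast] at hprev
    exact ⟨⟨hτt.symm, Set.mem_biUnion hmn hprev⟩, hfail (t + 1) (by omega) le_rfl⟩

lemma setOf_forall_not_regen_subset
    (hgap : ∀ t ω, τ t ω + L ≤ τ (t + 1) ω) (T : ℕ) :
    {ω | ∀ t, τ t ω < ⊤ ∧ ¬ ∀ j, K ((τ t ω).toNat + j) ω ≤ j} ⊆
      (⋃ n, failsAlong K τ L T n) ∪ ⋃ t ∈ Icc 1 T, lateFailure K L (τ t) := by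
  intro ω hω
  by_cases hfail : ∀ s, 1 ≤ s → s ≤ T → ω ∉ regenUpTo K L (τ s ω).toNat
  · exact .inl (Set.mem_iUnion_of_mem _ (mem_failsAlong hgap (fun s _ => (hω s).1.ne) hfail))
  · push Not at hfail
    obtain ⟨t, ht1, htT, hregen⟩ := hfail
    obtain ⟨hfin, hnot⟩ := hω t
    push Not at hnot
    obtain ⟨j, hj⟩ := hnot
    have hLj : L ≤ j := by
      by_contra! hjL
      exact absurd (Set.mem_iInter₂.1 hregen j (mem_range.2 hjL)) (not_le.2 hj)
    refine .inr <| Set.mem_biUnion (mem_Icc.2 ⟨ht1, htT⟩)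
      ⟨_, j - L, (ENat.natCast_toNat hfin.ne).symm, ?_⟩
    rwa [Nat.sub_add_cancel hLj]

end Failures

lemma pairwise_disjoint_setOf_eq_natCast_s15 {Ω : Type*} (σ : Ω → ℕ∞) :
    Pairwise (Disjoint on fun n : ℕ => {ω | σ ω = n}) :=
  (pairwise_disjoint_fiber σ).comp_of_injective Nat.cast_injective

section Bounds

variable {Ω : Type*} [MeasurableSpace Ω] {d : ℕ} {P : Measure Ω} [IsProbabilityMeasure P]
  {X : ℕ → Ω → Fin d → ℤ} {K : ℕ → Ω → ℕ}
  (hX : ∀ n, Measurable (X n)) (hK : ∀ n, Measurable (K n))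
  (hMI : ∀ n, IndepFun (K n) (historyMap X K n) P) (hid : ∀ n, P.map (K n) = P.map (K 0))

include hX hK hMI hid

lemma measure_iUnion_failsAlong_le {τ : ℕ → Ω → ℕ∞} {L : ℕ}
    (hτ : ∀ t n, MeasurableSet[history X K n] {ω | τ t ω = n}) (t : ℕ) :
    P (⋃ n, failsAlong K τ L t n) ≤ (1 - ∏ j ∈ range L, P {ω | K 0 ω ≤ j}) ^ t := by
  set c := ∏ j ∈ range L, P {ω | K 0 ω ≤ j}
  induction t with
  | zero => simpa using prob_le_one
  | succ t ih =>
    set J : ℕ → Set Ω := fun n =>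
      {ω | τ (t + 1) ω = n} ∩ ⋃ (m : ℕ) (_ : m + L ≤ n), failsAlong K τ L t m
    have hJ (n : ℕ) : MeasurableSet[history X K n] (J n) :=
      (hτ _ n).inter <| .iUnion fun m => .iUnion fun hm =>
        history_mono X K hm _ (measurableSet_history_failsAlong hτ t m)
    have hstep (n : ℕ) : P (failsAlong K τ L (t + 1) n) = P (J n) * (1 - c) := by
      have hsplit := measure_inter_add_sdiff (μ := P) (J n)
        (history_le X K hX hK _ _ (measurableSet_history_regenUpTo (X := X) K L n))
      rw [measure_inter_regenUpTo hK hMI hid (hJ n)] at hsplit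
      rw [ENNReal.mul_sub fun _ _ => measure_ne_top P _, mul_one]
      exact ENNReal.eq_sub_of_add_eq' (measure_ne_top P _) ((add_comm _ _).trans hsplit)
    calc P (⋃ n, failsAlong K τ L (t + 1) n)
        ≤ ∑' n, P (failsAlong K τ L (t + 1) n) := measure_iUnion_le _
      _ = (∑' n, P (J n)) * (1 - c) := by simp_rw [hstep]; exact ENNReal.tsum_mul_right
      _ ≤ P (⋃ n, J n) * (1 - c) := by
        gcongr
        exact tsum_meas_le_meas_iUnion_of_disjoint P (fun n => history_le X K hX hK n _ (hJ n))
          ((pairwise_disjoint_setOf_eq_natCast_s15 _).mono fun _ _ h =>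
            h.mono Set.inter_subset_left Set.inter_subset_left)
      _ ≤ P (⋃ m, failsAlong K τ L t m) * (1 - c) := by
        gcongr P ?_ * _
        exact Set.iUnion_subset fun n => Set.inter_subset_right.trans
          (Set.iUnion₂_subset fun m _ => Set.subset_iUnion (failsAlong K τ L t) m)
      _ ≤ (1 - c) ^ (t + 1) := by rw [pow_succ]; gcongr

lemma measure_lateFailure_le {σ : Ω → ℕ∞}
    (hσ : ∀ n, MeasurableSet[history X K n] {ω | σ ω = n}) (L : ℕ) :
    P (lateFailure K L σ) ≤ ∑' j, P {ω | j + L < K 0 ω} := by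
  have hterm (n j : ℕ) : P ({ω | σ ω = n} ∩ K (n + (j + L)) ⁻¹' Set.Ioi (j + L)) =
      P {ω | σ ω = n} * P {ω | j + L < K 0 ω} := by
    rw [measure_inter_preimage_K hMI (history_mono X K (by omega) _ (hσ n)),
      measure_preimage_K_eq hK hid]
    rfl
  calc P (lateFailure K L σ)
      = P (⋃ (n : ℕ) (j : ℕ), {ω | σ ω = n} ∩ K (n + (j + L)) ⁻¹' Set.Ioi (j + L)) := by
        congr 1; ext ω; simp [lateFailure]
    _ ≤ ∑' (n : ℕ) (j : ℕ), P ({ω | σ ω = n} ∩ K (n + (j + L)) ⁻¹' Set.Ioi (j + L)) :=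
        (measure_iUnion_le _).trans (ENNReal.tsum_le_tsum fun n => measure_iUnion_le _)
    _ = (∑' n : ℕ, P {ω | σ ω = n}) * ∑' j, P {ω | j + L < K 0 ω} := by
        simp_rw [hterm, ENNReal.tsum_mul_left, ENNReal.tsum_mul_right]
    _ ≤ 1 * ∑' j, P {ω | j + L < K 0 ω} := by
        gcongr
        exact (tsum_meas_le_meas_iUnion_of_disjoint P (fun n => history_le X K hX hK n _ (hσ n))
          (pairwise_disjoint_setOf_eq_natCast_s15 σ)).trans prob_le_one
    _ = ∑' j, P {ω | j + L < K 0 ω} := one_mul _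

lemma measure_setOf_forall_not_regen_le {τ : ℕ → Ω → ℕ∞} {L : ℕ}
    (hτ : ∀ t n, MeasurableSet[history X K n] {ω | τ t ω = n})
    (hgap : ∀ t ω, τ t ω + L ≤ τ (t + 1) ω) (T : ℕ) :
    P {ω | ∀ t, τ t ω < ⊤ ∧ ¬ ∀ j, K ((τ t ω).toNat + j) ω ≤ j} ≤
      (1 - ∏ j ∈ range L, P {ω | K 0 ω ≤ j}) ^ T + T * ∑' j, P {ω | j + L < K 0 ω} :=
  calc _ ≤ P (⋃ n, failsAlong K τ L T n) + P (⋃ t ∈ Icc 1 T, lateFailure K L (τ t)) :=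
        (measure_mono (setOf_forall_not_regen_subset hgap T)).trans (measure_union_le _ _)
    _ ≤ _ := by
      gcongr
      · exact measure_iUnion_failsAlong_le hX hK hMI hid hτ T
      · calc _ ≤ ∑ t ∈ Icc 1 T, P (lateFailure K L (τ t)) := measure_biUnion_finset_le _ _
          _ ≤ ∑ t ∈ Icc 1 T, ∑' j, P {ω | j + L < K 0 ω} :=
            sum_le_sum fun t _ => measure_lateFailure_le hX hK hMI hid (hτ t) L
          _ = T * ∑' j, P {ω | j + L < K 0 ω} := by simp

end Bounds

lemma tsum_measure_lt_ne_top {Ω : Type*} [MeasurableSpace Ω] {P : Measure Ω}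
    [IsProbabilityMeasure P] {f : Ω → ℕ} (hf : Integrable (fun ω => (f ω : ℝ)) P) :
    ∑' j : ℕ, P {ω | j < f ω} ≠ ∞ := by
  -- Mathlib states this tail bound for the measure `ℙ` of a `MeasureSpace`.
  let : MeasureSpace Ω := ⟨P⟩
  have h := tsum_prob_mem_Ioi_lt_top hf fun ω => Nat.cast_nonneg (f ω)
  simp only [Set.mem_Ioi, Nat.cast_lt] at h
  exact h.ne

lemma exists_pos_le_prod_range {q : ℕ → ℝ} {a : ℝ} (ha : 0 < a) (haq : ∀ j, a ≤ q j)
    (hq1 : ∀ j, q j ≤ 1) (hs : Summable fun j => 1 - q j) :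
    ∃ c > 0, ∀ L, c ≤ ∏ j ∈ range L, q j := by
  refine ⟨Real.exp (-(∑' j, (1 - q j)) / a), Real.exp_pos _, fun L => ?_⟩
  -- `1 / q = 1 + (1 - q) / q ≤ exp ((1 - q) / q) ≤ exp ((1 - q) / a)`
  have hfactor (j : ℕ) : Real.exp (-(1 - q j) / a) ≤ q j := by
    have hq : 0 < q j := ha.trans_le (haq j)
    have h1 : 1 / q j ≤ Real.exp ((1 - q j) / a) := calc
      1 / q j = (1 - q j) / q j + 1 := by field_simp; ring
      _ ≤ Real.exp ((1 - q j) / q j) := Real.add_one_le_exp _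
      _ ≤ Real.exp ((1 - q j) / a) := by gcongr; exacts [sub_nonneg.2 (hq1 j), haq j]
    rw [neg_div, Real.exp_neg]
    exact inv_le_of_inv_le₀ hq (by simpa using h1)
  calc Real.exp (-(∑' j, (1 - q j)) / a) ≤ Real.exp (-(∑ j ∈ range L, (1 - q j)) / a) := by
        gcongr; exact hs.sum_le_tsum _ fun j _ => sub_nonneg.2 (hq1 j)
    _ = ∏ j ∈ range L, Real.exp (-(1 - q j) / a) := by
        rw [← Real.exp_sum, ← sum_div, sum_neg_distrib]
    _ ≤ ∏ j ∈ range L, q j := prod_le_prod (fun j _ => (Real.exp_pos _).le) fun j _ => hfactor j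

lemma exists_pos_le_prod_measure_le {Ω : Type*} [MeasurableSpace Ω] {P : Measure Ω}
    [IsProbabilityMeasure P] {f : Ω → ℕ} (hf : Measurable f) (h0 : 0 < P {ω | f ω = 0})
    (htail : ∑' j : ℕ, P {ω | j < f ω} ≠ ∞) :
    ∃ c : ℝ≥0∞, c ≠ 0 ∧ ∀ L, c ≤ ∏ j ∈ range L, P {ω | f ω ≤ j} := by
  have hcompl (j : ℕ) : 1 - (P {ω | f ω ≤ j}).toReal = (P {ω | j < f ω}).toReal := by
    rw [show {ω | j < f ω} = {ω | f ω ≤ j}ᶜ by ext; simp,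
      prob_compl_eq_one_sub (measurableSet_le hf measurable_const),
      ENNReal.toReal_sub_of_le prob_le_one one_ne_top, toReal_one]
  obtain ⟨c, hc, hle⟩ := exists_pos_le_prod_range (q := fun j => (P {ω | f ω ≤ j}).toReal)
    (toReal_pos h0.ne' (measure_ne_top _ _))
    (fun j => toReal_mono (measure_ne_top _ _) (measure_mono fun ω (h : f ω = 0) => by simp [h]))
    (fun j => toReal_le_of_le_ofReal zero_le_one (by simpa using prob_le_one))
    (by simpa only [hcompl] using ENNReal.summable_toReal htail)
  refine ⟨ENNReal.ofReal c, (ofReal_pos.2 hc).ne', fun L => ?_⟩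
  calc ENNReal.ofReal c ≤ ENNReal.ofReal (∏ j ∈ range L, (P {ω | f ω ≤ j}).toReal) :=
        ofReal_le_ofReal (hle L)
    _ = ∏ j ∈ range L, P {ω | f ω ≤ j} := by
        rw [← toReal_prod, ofReal_toReal (prod_ne_top fun j _ => measure_ne_top _ _)]

lemma eq_zero_of_le_pow_add_mul {a c : ℝ≥0∞} {r : ℕ → ℝ≥0∞} (hc : c ≠ 0)
    (hr : Tendsto r atTop (𝓝 0)) (h : ∀ T L : ℕ, a ≤ (1 - c) ^ T + T * r L) : a = 0 := by
  have hT (T : ℕ) : a ≤ (1 - c) ^ T := by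
    have : Tendsto (fun L => (1 - c) ^ T + T * r L) atTop (𝓝 ((1 - c) ^ T)) := by
      simpa using tendsto_const_nhds.add (ENNReal.Tendsto.const_mul hr (.inr (natCast_ne_top T)))
    exact ge_of_tendsto' this (h T)
  exact nonpos_iff_eq_zero.1 <| ge_of_tendsto' (ENNReal.tendsto_pow_atTop_nhds_zero_of_lt_one
    (ENNReal.sub_lt_self one_ne_top one_ne_zero hc)) hT

theorem returns_eventually_regenerate_general {Ω : Type*} [MeasurableSpace Ω] {d : ℕ}
    (P : Measure Ω) (δ : ℝ) (X : ℕ → Ω → Fin d → ℤ) (K : ℕ → Ω → ℕ)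
    (hW : IsRandomMemoryWalk d P δ X K)
    (hK : Integrable (fun ω => (K 0 ω : ℝ)) P) :
    ∀ i : ℕ, 1 ≤ i →
      P[|regZero K] {ω | ∀ k : ℕ, i ≤ k →
          retTime X k ω < ⊤ ∧
            ¬ (∀ j : ℕ, K (ENat.toNat (retTime X k ω) + j) ω ≤ j)} = 0 := by
  intro i _
  have := hW.isProb
  have htail := tsum_measure_lt_ne_top hK
  obtain ⟨c, hc, hcle⟩ := exists_pos_le_prod_measure_le (hW.measK 0) hW.posK0 htail
  refine cond_absolutelyContinuous <|
    eq_zero_of_le_pow_add_mul hc (ENNReal.tendsto_sum_nat_add _ htail) fun T L => ?_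
  calc _ ≤ P {ω | ∀ t, retTime X (i + t * L) ω < ⊤ ∧
          ¬ ∀ j, K ((retTime X (i + t * L) ω).toNat + j) ω ≤ j} :=
        measure_mono fun ω hω t => by exact hω _ (Nat.le_add_right _ _)
    _ ≤ (1 - ∏ j ∈ range L, P {ω | K 0 ω ≤ j}) ^ T + T * ∑' j, P {ω | j + L < K 0 ω} :=
        measure_setOf_forall_not_regen_le hW.measX hW.measK hW.memIndep hW.identK
          (fun _ n => measurableSet_history_retTime_eq K _ n)
          (fun t ω => by simpa [add_mul, add_assoc] using retTime_add_le (i + t * L) L ω) T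
    _ ≤ (1 - c) ^ T + T * ∑' j, P {ω | j + L < K 0 ω} := by gcongr; exact hcle L

/-- If `E[K₀] < ∞`, then for every `i ≥ 1`, under `P̄ := P(· | D₀)` it is
almost surely impossible that for all `k ≥ i` the return time `R_k` is finite and fails to
be a regeneration time, i.e.
`P̄(∀ k ≥ i : R_k < ∞ and D_{R_k} does not occur) = 0`. -/
theorem returns_eventually_regenerate {Ω : Type*} [MeasurableSpace Ω] {d : ℕ} (hd : 1 ≤ d)
    (P : Measure Ω) (δ : ℝ) (X : ℕ → Ω → Fin d → ℤ) (K : ℕ → Ω → ℕ)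
    (hW : IsRandomMemoryWalk d P δ X K)
    (hK : Integrable (fun ω => (K 0 ω : ℝ)) P) :
    ∀ i : ℕ, 1 ≤ i →
      P[|regZero K] {ω | ∀ k : ℕ, i ≤ k →
          retTime X k ω < ⊤ ∧
            ¬ (∀ j : ℕ, K (ENat.toNat (retTime X k ω) + j) ω ≤ j)} = 0 :=
  returns_eventually_regenerate_general P δ X K hW hK
end
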